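/- Let S = ℂ[x₁,…,xₙ] with W = the hyperoctahedral group acting by permutations and sign changes of the variables (the Weyl group of type Cₙ), and let W₀ be the stabilizer of the functional −x₁. Then S^{W₀} = S^W[x₁] and S^{W₀} is a free S^W-module with basis 1, x₁, …, x₁^{2n−1}. -/

import Mathlib

open MvPolynomial

/-- The substitution `xᵢ ↦ εᵢ · x_{σ(i)}` determined by a signed permutation `(σ, ε)`. -/
noncomputable def signedSub {n : ℕ} (p : Equiv.Perm (Fin n) × (Fin n → ℂ)) :
    Fin n → MvPolynomial (Fin n) ℂ :=
  fun i => C (p.2 i) * X (p.1 i)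

/-- The subalgebra of polynomials invariant under a set `G` of signed permutations of the
variables, acting by `xᵢ ↦ εᵢ · x_{σ(i)}`. -/
noncomputable def signedInvariants {n : ℕ} (G : Set (Equiv.Perm (Fin n) × (Fin n → ℂ))) :
    Subalgebra ℂ (MvPolynomial (Fin n) ℂ) where
  carrier := {f | ∀ p ∈ G, aeval (signedSub p) f = f}
  mul_mem' := fun ha hb p hp => by rw [map_mul, ha p hp, hb p hp]
  add_mem' := fun ha hb p hp => by rw [map_add, ha p hp, hb p hp]
  algebraMap_mem' := fun c p hp => by
    rw [MvPolynomial.algebraMap_eq, aeval_C, MvPolynomial.algebraMap_eq]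

/-! The variables are `x₀, …, xₙ`; `x₀` plays the role of the paper's `x₁`, and
`αₖ = eₖ(x₀², …, xₙ²)`, `βₖ = eₖ(x₁², …, xₙ²)`; `signedPerms` is `W` and
`signedPermsFixingX0` is `W₀`.

A `W₀`-invariant `f` is invariant under the signed permutations of `x₁, …, xₙ`, so its
coefficients as a polynomial in `x₀` are invariants of the hyperoctahedral group in those
variables. Such invariants are even in every variable, hence symmetric polynomials in the squares,
i.e. polynomials in the `βₖ`; the relations `αₖ₊₁ = x₀² βₖ + βₖ₊₁` then put `f` in `S^W[x₀]`.
Since `x₀` is a root of `∏ᵢ (T² − xᵢ²)`, which is monic of degree `2(n+1)` with coefficients in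
`S^W`, division with remainder spans `S^W[x₀]` by `1, x₀, …, x₀^(2n+1)` over `S^W`. These are
independent: a relation with coefficients in `S^W` is a polynomial of degree `< 2(n+1)` that
vanishes at the `2(n+1)` distinct images `±xᵢ` of `x₀` under `W`. -/

def signedPerms (m : ℕ) : Set (Equiv.Perm (Fin m) × (Fin m → ℂ)) :=
  {p | ∀ i, p.2 i = 1 ∨ p.2 i = -1}

def signedPermsFixingX0 (n : ℕ) : Set (Equiv.Perm (Fin (n + 1)) × (Fin (n + 1) → ℂ)) :=
  {p | (∀ i, p.2 i = 1 ∨ p.2 i = -1) ∧ signedSub p 0 = X 0}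

lemma signedInvariants_anti {m : ℕ} {G H : Set (Equiv.Perm (Fin m) × (Fin m → ℂ))}
    (h : G ⊆ H) : signedInvariants H ≤ signedInvariants G :=
  fun _ hf p hp => hf p (h hp)

section PolynomialFacts

variable {σ τ R : Type*} [CommSemiring R] {n : ℕ}

lemma coeff_aeval_C_mul_X (u : σ → R) (g : MvPolynomial σ R) (d : σ →₀ ℕ) :
    coeff d (aeval (fun i => C (u i) * X i) g) = (d.prod fun i k => u i ^ k) * coeff d g := by
  classical
  induction g using MvPolynomial.induction_on' with
  | monomial t a =>
    simp only [aeval_monomial, mul_pow, Finsupp.prod_mul, ← map_pow, ← map_finsuppProd,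
      algebraMap_eq, coeff_C_mul, coeff_monomial, ← mul_assoc, ← map_mul]
    have hX : (t.prod fun i k => (X i : MvPolynomial σ R) ^ k) = monomial t 1 := by
      rw [monomial_eq, C_1, one_mul]
    rw [hX, coeff_monomial]
    split_ifs with h
    · rw [h, mul_one, mul_comm]
    · rw [mul_zero, mul_zero]
  | add g₁ g₂ h₁ h₂ => simp only [map_add, coeff_add, h₁, h₂, mul_add]

lemma exists_expand_two_eq (g : MvPolynomial σ R) (hg : ∀ d ∈ g.support, ∀ i, Even (d i)) :
    ∃ h, expand 2 h = g := by
  refine ⟨∑ d ∈ g.support, monomial (d.mapRange (· / 2) (Nat.zero_div 2)) (coeff d g), ?_⟩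
  conv_rhs => rw [g.as_sum]
  rw [map_sum]
  refine Finset.sum_congr rfl fun d hd => ?_
  rw [expand_monomial]
  congr
  ext i
  simp [Nat.mul_div_cancel' (even_iff_two_dvd.mp (hg d hd i))]

lemma Multiset.esymm_cons_succ (a : R) (s : Multiset R) (k : ℕ) :
    (a ::ₘ s).esymm (k + 1) = a * s.esymm k + s.esymm (k + 1) := by
  simp only [Multiset.esymm, Multiset.powersetCard_cons, Multiset.map_add, Multiset.sum_add,
    Multiset.map_map, Function.comp_def, Multiset.prod_cons, Multiset.sum_map_mul_left]
  exact add_comm _ _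

lemma rename_expand_esymm [Fintype σ] (f : σ → τ) (p k : ℕ) :
    rename f (expand p (esymm σ R k)) =
      (Finset.univ.val.map fun i => (X (f i) : MvPolynomial τ R) ^ p).esymm k := by
  rw [← aeval_esymm_eq_multiset_esymm σ R, ← AlgHom.comp_apply]
  exact DFunLike.congr_fun (algHom_ext fun i => by simp) _

lemma expand_esymm_fin_succ (p k : ℕ) :
    expand p (esymm (Fin (n + 1)) R (k + 1)) =
      X 0 ^ p * rename Fin.succ (expand p (esymm (Fin n) R k)) +
        rename Fin.succ (expand p (esymm (Fin n) R (k + 1))) := by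
  have h := rename_expand_esymm (R := R) (id : Fin (n + 1) → Fin (n + 1)) p (k + 1)
  rw [rename_id_apply] at h
  simp only [h, rename_expand_esymm, Fin.univ_val_map, List.ofFn_succ, ← Multiset.cons_coe,
    Multiset.esymm_cons_succ, id]

lemma finSuccEquiv_rename_succ (g : MvPolynomial (Fin n) R) :
    finSuccEquiv R n (rename Fin.succ g) = Polynomial.C g := by
  have h : (finSuccEquiv R n).toAlgHom.comp (rename Fin.succ) = Polynomial.CAlgHom :=
    algHom_ext fun i => by simp [finSuccEquiv_X_succ]
  exact DFunLike.congr_fun h g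

end PolynomialFacts

lemma exists_eq_sum_pow_of_mem_sup_adjoin {k A : Type*} [CommRing k] [CommRing A] [Nontrivial A]
    [Algebra k A] {R : Subalgebra k A} {x : A} {P : Polynomial R} (hP : P.Monic)
    (hx : Polynomial.aeval x P = 0) {d : ℕ} (hd : P.natDegree ≤ d) {y : A}
    (hy : y ∈ R ⊔ Algebra.adjoin k {x}) : ∃ c : Fin d → R, y = ∑ j, (c j : A) * x ^ (j : ℕ) := by
  have hle : R ⊔ Algebra.adjoin k {x} ≤
      ((Polynomial.aeval x : Polynomial R →ₐ[R] A).restrictScalars k).range := by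
    refine sup_le (fun r hr => ⟨Polynomial.C ⟨r, hr⟩, by simp⟩) ?_
    rw [Algebra.adjoin_le_iff, Set.singleton_subset_iff]
    exact ⟨Polynomial.X, by simp⟩
  obtain ⟨q, rfl⟩ := hle hy
  have hdeg : (q %ₘ P).degree < d :=
    (Polynomial.degree_modByMonic_lt q hP).trans_le
      (Polynomial.degree_le_natDegree.trans (by exact_mod_cast hd))
  refine ⟨fun j => (q %ₘ P).coeff j, ?_⟩
  change Polynomial.aeval x q = _
  rw [← Polynomial.aeval_modByMonic_eq_self_of_root hx,
    Polynomial.aeval_def, Polynomial.eval₂_eq_sum, ← Polynomial.sum_fin _ (by simp) hdeg]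
  rfl

section SignedPerms

variable {m : ℕ}

lemma signedSub_sq {p : Equiv.Perm (Fin m) × (Fin m → ℂ)} (hp : p ∈ signedPerms m) (i : Fin m) :
    signedSub p i ^ 2 = X (p.1 i) ^ 2 := by
  rcases hp i with h | h <;> simp [signedSub, h]

lemma aeval_signedSub_expand_two {p : Equiv.Perm (Fin m) × (Fin m → ℂ)} (hp : p ∈ signedPerms m)
    (g : MvPolynomial (Fin m) ℂ) :
    aeval (signedSub p) (expand 2 g) = expand 2 (rename p.1 g) := by
  rw [aeval_expand, ← AlgHom.comp_apply]
  refine DFunLike.congr_fun (algHom_ext fun i => ?_) g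
  simp [signedSub_sq hp]

lemma signedSub_perm (e : Equiv.Perm (Fin m)) :
    signedSub (e, fun _ => (1 : ℂ)) = X ∘ e := by
  funext i
  simp [signedSub]

lemma even_of_mem_signedInvariants {g : MvPolynomial (Fin m) ℂ}
    (hg : g ∈ signedInvariants (signedPerms m)) {d : Fin m →₀ ℕ} (hd : coeff d g ≠ 0)
    (i : Fin m) : Even (d i) := by
  classical
  set ε : Fin m → ℂ := fun j => if j = i then -1 else 1
  have hε : (1, ε) ∈ signedPerms m := fun j => by by_cases h : j = i <;> simp [ε, h]
  have hflip := congrArg (coeff d) (hg _ hε)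
  rw [show signedSub (1, ε) = fun j => C (ε j) * X j from rfl, coeff_aeval_C_mul_X,
    Finsupp.prod_fintype _ _ (fun _ => pow_zero _)] at hflip
  simp only [ε, ite_pow, one_pow, Finset.prod_ite_eq', Finset.mem_univ, if_true] at hflip
  refine (neg_one_pow_eq_one_iff_even (by norm_num : (-1 : ℂ) ≠ 1)).mp ?_
  exact mul_right_cancel₀ hd (hflip.trans (one_mul _).symm)

lemma exists_isSymmetric_expand_two_eq {g : MvPolynomial (Fin m) ℂ}
    (hg : g ∈ signedInvariants (signedPerms m)) : ∃ h : MvPolynomial (Fin m) ℂ,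
      h.IsSymmetric ∧ expand 2 h = g := by
  obtain ⟨h, rfl⟩ := exists_expand_two_eq g fun d hd => even_of_mem_signedInvariants hg
    (mem_support_iff.mp hd)
  refine ⟨h, fun e => expand_injective two_pos ?_, rfl⟩
  rw [← rename_expand, rename_eq_aeval, ← signedSub_perm]
  exact hg _ fun _ => Or.inl rfl

lemma expand_two_esymm_mem_signedInvariants (k : ℕ) :
    expand 2 (esymm (Fin m) ℂ k) ∈ signedInvariants (signedPerms m) := fun _ hp => by
  rw [aeval_signedSub_expand_two hp, rename_esymm]

lemma mem_adjoin_expand_two_esymm {g : MvPolynomial (Fin m) ℂ}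
    (hg : g ∈ signedInvariants (signedPerms m)) :
    g ∈ Algebra.adjoin ℂ (Set.range fun k : Fin m => expand 2 (esymm (Fin m) ℂ (k + 1))) := by
  obtain ⟨h, hsym, rfl⟩ := exists_isSymmetric_expand_two_eq hg
  obtain ⟨q, hq⟩ := esymmAlgHom_fin_surjective ℂ le_rfl ⟨h, hsym⟩
  rw [Algebra.adjoin_range_eq_range_aeval]
  refine ⟨q, ?_⟩
  have hq' : aeval (fun k : Fin m => esymm (Fin m) ℂ (k + 1)) q = h := by
    rw [← esymmAlgHom_apply, hq]
  change aeval _ q = _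
  rw [← hq', ← AlgHom.comp_apply, comp_aeval]

end SignedPerms

section OrbitPolynomial

variable {m : ℕ}

noncomputable def orbitPolynomial (m : ℕ) : Polynomial (MvPolynomial (Fin m) ℂ) :=
  ∏ i, (Polynomial.X ^ 2 - Polynomial.C (X i ^ 2))

lemma monic_orbitPolynomial : (orbitPolynomial m).Monic :=
  Polynomial.monic_prod_of_monic _ _ fun _ _ => Polynomial.monic_X_pow_sub_C _ two_ne_zero

lemma natDegree_orbitPolynomial : (orbitPolynomial m).natDegree = 2 * m := by
  rw [orbitPolynomial, Polynomial.natDegree_prod_of_monic _ _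
    fun _ _ => Polynomial.monic_X_pow_sub_C _ two_ne_zero]
  simp only [Polynomial.natDegree_X_pow_sub_C, Finset.sum_const, Finset.card_univ,
    Fintype.card_fin, smul_eq_mul, mul_comm]

lemma eval_X_orbitPolynomial (i : Fin m) : (orbitPolynomial m).eval (X i) = 0 := by
  rw [orbitPolynomial, Polynomial.eval_prod]
  exact Finset.prod_eq_zero (Finset.mem_univ i) (by simp)

lemma map_orbitPolynomial {p : Equiv.Perm (Fin m) × (Fin m → ℂ)} (hp : p ∈ signedPerms m) :
    (orbitPolynomial m).map (aeval (signedSub p)).toRingHom = orbitPolynomial m := by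
  simp only [orbitPolynomial, Polynomial.map_prod, Polynomial.map_sub, Polynomial.map_pow,
    Polynomial.map_X, Polynomial.map_C]
  exact Fintype.prod_equiv p.1 _ _ fun i => by simp [signedSub_sq hp]

lemma coeff_orbitPolynomial_mem (k : ℕ) :
    (orbitPolynomial m).coeff k ∈ signedInvariants (signedPerms m) := fun p hp => by
  conv_rhs => rw [← map_orbitPolynomial hp]
  rw [Polynomial.coeff_map]
  rfl

lemma exists_monic_aeval_X_eq_zero (i : Fin m) :
    ∃ P : Polynomial (signedInvariants (signedPerms m)),
      P.Monic ∧ P.natDegree = 2 * m ∧ Polynomial.aeval (X i : MvPolynomial (Fin m) ℂ) P = 0 := by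
  have hlifts : orbitPolynomial m ∈ Polynomial.lifts
      (algebraMap (signedInvariants (signedPerms m)) (MvPolynomial (Fin m) ℂ)) :=
    (Polynomial.lifts_iff_coeff_lifts _).mpr fun k => ⟨⟨_, coeff_orbitPolynomial_mem k⟩, rfl⟩
  obtain ⟨P, hmap, hdeg, hmonic⟩ :=
    Polynomial.lifts_and_natDegree_eq_and_monic hlifts monic_orbitPolynomial
  refine ⟨P, hmonic, hdeg.trans natDegree_orbitPolynomial, ?_⟩
  rw [Polynomial.aeval_def, Polynomial.eval₂_eq_eval_map, hmap, eval_X_orbitPolynomial]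

end OrbitPolynomial

section Stabilizer

variable {n : ℕ}

/-- `q` acting on `x₁, …, xₙ`, fixing `x₀`. -/
noncomputable def signedPermSucc (q : Equiv.Perm (Fin n) × (Fin n → ℂ)) :
    Equiv.Perm (Fin (n + 1)) × (Fin (n + 1) → ℂ) :=
  (Equiv.Perm.decomposeFin.symm (0, q.1), Fin.cons 1 q.2)

lemma signedSub_signedPermSucc_zero (q : Equiv.Perm (Fin n) × (Fin n → ℂ)) :
    signedSub (signedPermSucc q) 0 = X 0 := by
  simp [signedSub, signedPermSucc]

lemma signedSub_signedPermSucc_succ (q : Equiv.Perm (Fin n) × (Fin n → ℂ)) (j : Fin n) :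
    signedSub (signedPermSucc q) j.succ = rename Fin.succ (signedSub q j) := by
  simp [signedSub, signedPermSucc, Equiv.Perm.decomposeFin_symm_apply_succ]

lemma signedPermSucc_mem {q : Equiv.Perm (Fin n) × (Fin n → ℂ)} (hq : q ∈ signedPerms n) :
    signedPermSucc q ∈ signedPermsFixingX0 n :=
  ⟨Fin.cases (Or.inl rfl) hq, signedSub_signedPermSucc_zero q⟩

lemma finSuccEquiv_aeval_signedSub_signedPermSucc (q : Equiv.Perm (Fin n) × (Fin n → ℂ))
    (f : MvPolynomial (Fin (n + 1)) ℂ) :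
    finSuccEquiv ℂ n (aeval (signedSub (signedPermSucc q)) f) =
      (finSuccEquiv ℂ n f).map (aeval (signedSub q)).toRingHom := by
  have h : (finSuccEquiv ℂ n).toAlgHom.comp (aeval (signedSub (signedPermSucc q))) =
      (Polynomial.mapAlgHom (aeval (signedSub q))).comp (finSuccEquiv ℂ n).toAlgHom := by
    refine algHom_ext fun i => Fin.cases ?_ (fun j => ?_) i
    · simp [signedSub_signedPermSucc_zero, finSuccEquiv_X_zero]
    · simp [signedSub_signedPermSucc_succ, finSuccEquiv_rename_succ, finSuccEquiv_X_succ]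
  exact DFunLike.congr_fun h f

lemma coeff_finSuccEquiv_mem_signedInvariants {f : MvPolynomial (Fin (n + 1)) ℂ}
    (hf : f ∈ signedInvariants (signedPermsFixingX0 n)) (k : ℕ) :
    (finSuccEquiv ℂ n f).coeff k ∈ signedInvariants (signedPerms n) := fun q hq => by
  have h := finSuccEquiv_aeval_signedSub_signedPermSucc q f
  rw [hf _ (signedPermSucc_mem hq)] at h
  conv_rhs => rw [h]
  rw [Polynomial.coeff_map, AlgHom.toRingHom_eq_coe, RingHom.coe_coe]

lemma rename_succ_expand_two_esymm_mem (k : ℕ) :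
    rename Fin.succ (expand 2 (esymm (Fin n) ℂ k)) ∈
      signedInvariants (signedPerms (n + 1)) ⊔ Algebra.adjoin ℂ {X 0} := by
  have hX : (X 0 : MvPolynomial (Fin (n + 1)) ℂ) ∈
      signedInvariants (signedPerms (n + 1)) ⊔ Algebra.adjoin ℂ {X 0} :=
    Algebra.mem_sup_right (Algebra.self_mem_adjoin_singleton ℂ _)
  induction k with
  | zero => simp [esymm_zero]
  | succ k ih =>
    rw [eq_sub_of_add_eq' (expand_esymm_fin_succ (R := ℂ) 2 k).symm]
    exact sub_mem (Algebra.mem_sup_left (expand_two_esymm_mem_signedInvariants _))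
      (mul_mem (pow_mem hX 2) ih)

lemma mem_sup_adjoin_of_mem_signedInvariants {f : MvPolynomial (Fin (n + 1)) ℂ}
    (hf : f ∈ signedInvariants (signedPermsFixingX0 n)) :
    f ∈ signedInvariants (signedPerms (n + 1)) ⊔ Algebra.adjoin ℂ {X 0} := by
  set F := finSuccEquiv ℂ n f
  have hX : (X 0 : MvPolynomial (Fin (n + 1)) ℂ) ∈
      signedInvariants (signedPerms (n + 1)) ⊔ Algebra.adjoin ℂ {X 0} :=
    Algebra.mem_sup_right (Algebra.self_mem_adjoin_singleton ℂ _)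
  have hβ : (Algebra.adjoin ℂ (Set.range fun k : Fin n => expand 2 (esymm (Fin n) ℂ (k + 1)))).map
      (rename Fin.succ) ≤ signedInvariants (signedPerms (n + 1)) ⊔ Algebra.adjoin ℂ {X 0} := by
    rw [AlgHom.map_adjoin, Algebra.adjoin_le_iff]
    rintro _ ⟨_, ⟨k, rfl⟩, rfl⟩
    exact rename_succ_expand_two_esymm_mem _
  have hf' : f = ∑ k ∈ Finset.range (F.natDegree + 1), rename Fin.succ (F.coeff k) * X 0 ^ k := by
    apply (finSuccEquiv ℂ n).injective
    simp only [map_sum, map_mul, map_pow, finSuccEquiv_rename_succ, finSuccEquiv_X_zero]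
    exact F.as_sum_range_C_mul_X_pow
  rw [hf']
  refine sum_mem fun k _ => mul_mem ?_ (pow_mem hX k)
  exact hβ ⟨_, mem_adjoin_expand_two_esymm (coeff_finSuccEquiv_mem_signedInvariants hf k), rfl⟩

end Stabilizer

section Independence

variable {n : ℕ}

lemma swap_const_mem_signedPerms (i : Fin (n + 1)) (u : ℤˣ) :
    (Equiv.swap 0 i, fun _ => ((u : ℤ) : ℂ)) ∈ signedPerms (n + 1) := fun _ => by
  rcases Int.units_eq_one_or u with rfl | rfl <;> simp

lemma linearIndependent_X_zero_pow :
    LinearIndependent (signedInvariants (signedPerms (n + 1)))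
      (fun j : Fin (2 * (n + 1)) => (X 0 : MvPolynomial (Fin (n + 1)) ℂ) ^ (j : ℕ)) := by
  rw [Fintype.linearIndependent_iff]
  intro g hg
  set Q : Polynomial (MvPolynomial (Fin (n + 1)) ℂ) :=
    ∑ j, Polynomial.C (g j : MvPolynomial (Fin (n + 1)) ℂ) * Polynomial.X ^ (j : ℕ)
  have heval : ∀ p ∈ signedPerms (n + 1), Q.eval (signedSub p 0) = 0 := fun p hp => by
    have hg' : ∀ j, aeval (signedSub p) (g j : MvPolynomial (Fin (n + 1)) ℂ) = g j :=
      fun j => (g j).2 p hp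
    have h := congrArg (aeval (signedSub p)) hg
    simp only [map_sum, map_zero, Subalgebra.smul_def, smul_eq_mul, map_mul, map_pow, aeval_X,
      hg'] at h
    simpa [Q, Polynomial.eval_finsetSum] using h
  let r : Fin (n + 1) × ℤˣ → MvPolynomial (Fin (n + 1)) ℂ :=
    fun iu => signedSub (Equiv.swap 0 iu.1, fun _ => ((iu.2 : ℤ) : ℂ)) 0
  have hr : Function.Injective r := by
    rintro ⟨i, u⟩ ⟨i', u'⟩ h
    simp only [r, signedSub, Equiv.swap_apply_left, C_mul_X_eq_monomial, monomial_eq_monomial_iff,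
      Finsupp.single_left_inj one_ne_zero, Int.cast_inj, Int.cast_eq_zero,
      Units.ne_zero, false_and, or_false] at h
    obtain ⟨rfl, hu⟩ := h
    rw [Units.val_inj.mp hu]
  have hQ : Q = 0 := by
    refine Polynomial.eq_zero_of_natDegree_lt_card_of_eval_eq_zero Q hr
      (fun iu => heval _ (swap_const_mem_signedPerms iu.1 iu.2)) ?_
    refine (Polynomial.natDegree_sum_le_of_forall_le _ _ fun j _ =>
      (Polynomial.natDegree_C_mul_X_pow_le _ _).trans (Nat.le_sub_one_of_lt j.2)).trans_lt ?_
    simp only [Fintype.card_prod, Fintype.card_fin, Fintype.card_units_int]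
    omega
  intro j
  have h := congrArg (Polynomial.coeff · j) hQ
  simpa [Q, Polynomial.finsetSum_coeff, Polynomial.coeff_C_mul_X_pow, Fin.val_inj] using h

end Independence

/-- Let `S = ℂ[x₁,…,xₙ]` (here with `n+1` variables), `W` the hyperoctahedral group of
signed permutations of the variables (the Weyl group of type `Cₙ`), and `W₀` the
stabilizer of the weight `−x₁`.  Then `S^{W₀} = S^W[x₁]`, and `S^{W₀}` is a free
`S^W`-module with basis `1, x₁, …, x₁^{2n−1}`. -/
theorem stmt_11 (n : ℕ) :
    (signedInvariants {p : Equiv.Perm (Fin (n + 1)) × (Fin (n + 1) → ℂ) |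
        (∀ i, p.2 i = 1 ∨ p.2 i = -1) ∧ signedSub p 0 = X 0} =
      signedInvariants {p : Equiv.Perm (Fin (n + 1)) × (Fin (n + 1) → ℂ) |
        ∀ i, p.2 i = 1 ∨ p.2 i = -1} ⊔ Algebra.adjoin ℂ {X 0}) ∧
    ∀ f ∈ signedInvariants {p : Equiv.Perm (Fin (n + 1)) × (Fin (n + 1) → ℂ) |
        (∀ i, p.2 i = 1 ∨ p.2 i = -1) ∧ signedSub p 0 = X 0},
      ∃! c : Fin (2 * (n + 1)) →
          ↥(signedInvariants {p : Equiv.Perm (Fin (n + 1)) × (Fin (n + 1) → ℂ) |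
              ∀ i, p.2 i = 1 ∨ p.2 i = -1}),
        f = ∑ j : Fin (2 * (n + 1)),
          (c j : MvPolynomial (Fin (n + 1)) ℂ) * X 0 ^ (j : ℕ) := by
  have hspan : ∀ f ∈ signedInvariants (signedPermsFixingX0 n),
      ∃ c : Fin (2 * (n + 1)) → signedInvariants (signedPerms (n + 1)),
        f = ∑ j, (c j : MvPolynomial (Fin (n + 1)) ℂ) * X 0 ^ (j : ℕ) := fun f hf => by
    obtain ⟨P, hmonic, hdeg, hroot⟩ := exists_monic_aeval_X_eq_zero (0 : Fin (n + 1))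
    exact exists_eq_sum_pow_of_mem_sup_adjoin hmonic hroot hdeg.le
      (mem_sup_adjoin_of_mem_signedInvariants hf)
  refine ⟨le_antisymm (fun f hf => mem_sup_adjoin_of_mem_signedInvariants hf)
    (sup_le (signedInvariants_anti fun p hp => hp.1) ?_), fun f hf => ?_⟩
  · rw [Algebra.adjoin_le_iff, Set.singleton_subset_iff]
    exact fun p hp => by rw [aeval_X]; exact hp.2
  · obtain ⟨c, hc⟩ := hspan f hf
    refine ⟨c, hc, fun c' hc' => funext fun j => ?_⟩
    refine Fintype.linearIndependent_iffₛ.mp linearIndependent_X_zero_pow c' c ?_ j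
    exact hc'.symm.trans hc
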